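/- arXiv:2106.02538 — 6 statements merged into one kernel-verified Lean document; each statement's English description precedes it below -/
import Mathlib

section
/- For any two persistence diagrams X and Y, the bottleneck distance is the vanishing point of the bottleneck profile: W_∞(X,Y) = inf{t > 0 : D_{X,Y}(t) = 0}. In particular, D_{X,Y}(t) = 0 for every t > W_∞(X,Y). -/
open scoped ENNReal Classical

/-- A persistence diagram: a finite multiset of points strictly above the diagonal of `ℝ²`.
Distances in `ℝ × ℝ` are measured by the product (sup-norm, i.e. `p = ∞`) metric `dist`. -/
structure PD where
  pts : Multiset (ℝ × ℝ)
  birth_lt_death : ∀ x ∈ pts, x.1 < x.2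

/-- Orthogonal projection of a point onto the diagonal `Δ = {(t, t) : t ∈ ℝ}`. -/
noncomputable def diagProj (x : ℝ × ℝ) : ℝ × ℝ := ((x.1 + x.2) / 2, (x.1 + x.2) / 2)

/-- The distance of a matched pair: a pair of two diagonal points counts as distance `0`,
otherwise the distance in `ℝ × ℝ` is used. -/
noncomputable def pairCost (u v : ℝ × ℝ) : ℝ :=
  if u.1 = u.2 ∧ v.1 = v.2 then 0 else dist u v

/-- `P` encodes a matching, i.e. a bijection `η : X₀ ⊔ Y₀' → Y₀ ⊔ X₀'`, as the multiset of
matched pairs `(u, η u)`: its first marginal is `X₀ ⊔ Y₀'` and its second is `Y₀ ⊔ X₀'`. -/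
def IsMatching (X Y : PD) (P : Multiset ((ℝ × ℝ) × (ℝ × ℝ))) : Prop :=
  P.map Prod.fst = X.pts + Y.pts.map diagProj ∧
  P.map Prod.snd = Y.pts + X.pts.map diagProj

/-- The bottleneck profile `D_{X,Y}(t) = inf_η |{u : d(u, η u) > t}|`. -/
noncomputable def bprofile (X Y : PD) (t : ℝ) : ℝ≥0∞ :=
  ⨅ P : {P : Multiset ((ℝ × ℝ) × (ℝ × ℝ)) // IsMatching X Y P},
    ((Multiset.countP (fun uv => t < pairCost uv.1 uv.2) P.1 : ℕ) : ℝ≥0∞)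

/-- The bottleneck distance `W_∞(X,Y) = inf_η sup_u d(u, η u)`, expressed as the infimum of
all `r` bounding every matched distance of some matching. -/
noncomputable def bottleneckDist (X Y : PD) : ℝ :=
  sInf {r : ℝ | ∃ P, IsMatching X Y P ∧ ∀ uv ∈ P, pairCost uv.1 uv.2 ≤ r}

/-!
An upper set `S ⊆ ℝ` contains `(sInf S, ∞)`, so removing its nonpositive part does not move its
infimum as long as that infimum is nonnegative. The set of bounds `r` achieved by matchings is
such an upper set, `D_{X,Y}(t) = 0` says exactly that `t` is one of these bounds, and the
infimum is nonnegative because costs are: a bound `r < 0` is only achieved by the empty matching,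
in which case every real is a bound and `sInf ℝ = 0` by convention.
-/

open Set

lemma IsUpperSet.Ioi_csInf_subset {S : Set ℝ} (hS : IsUpperSet S) (hne : S.Nonempty) :
    Ioi (sInf S) ⊆ S := fun _ ht ↦
  let ⟨_, hs, hst⟩ := exists_lt_of_csInf_lt hne ht
  hS hst.le hs

lemma IsUpperSet.csInf_Ioi_inter {S : Set ℝ} (hS : IsUpperSet S) (hne : S.Nonempty)
    (h0 : 0 ≤ sInf S) : sInf (Ioi 0 ∩ S) = sInf S := by
  have hsub : Ioi (sInf S) ⊆ Ioi 0 ∩ S := fun t ht ↦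
    ⟨h0.trans_lt ht, hS.Ioi_csInf_subset hne ht⟩
  refine le_antisymm ?_ (le_csInf ?_ fun t ht ↦ ?_)
  · calc sInf (Ioi 0 ∩ S) ≤ sInf (Ioi (sInf S)) :=
          csInf_le_csInf ⟨0, fun _ ht ↦ ht.1.le⟩ nonempty_Ioi hsub
      _ = sInf S := csInf_Ioi
  · exact nonempty_Ioi.mono hsub
  · by_cases hbdd : BddBelow S
    · exact csInf_le hbdd ht.2
    · rw [Real.sInf_of_not_bddBelow hbdd]
      exact ht.1.le

lemma pairCost_nonneg (u v : ℝ × ℝ) : 0 ≤ pairCost u v := by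
  unfold pairCost
  split
  · exact le_rfl
  · exact dist_nonneg

def matchingBounds (X Y : PD) : Set ℝ :=
  {r : ℝ | ∃ P, IsMatching X Y P ∧ ∀ uv ∈ P, pairCost uv.1 uv.2 ≤ r}

lemma isMatching_diagProj (X Y : PD) :
    IsMatching X Y (X.pts.map (fun x ↦ (x, diagProj x)) + Y.pts.map (fun y ↦ (diagProj y, y))) := by
  constructor
  · simp [Multiset.map_map]
  · simp [Multiset.map_map, add_comm]

lemma matchingBounds_nonempty (X Y : PD) : (matchingBounds X Y).Nonempty := by
  set P := X.pts.map (fun x ↦ (x, diagProj x)) + Y.pts.map (fun y ↦ (diagProj y, y))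
  obtain ⟨r, hr⟩ := (P.toFinset.image fun uv ↦ pairCost uv.1 uv.2).bddAbove
  exact ⟨r, P, isMatching_diagProj X Y, fun uv huv ↦
    hr (Finset.mem_image_of_mem _ (Multiset.mem_toFinset.2 huv))⟩

lemma isUpperSet_matchingBounds (X Y : PD) : IsUpperSet (matchingBounds X Y) :=
  fun _ _ hrs ⟨P, hP, hb⟩ ↦ ⟨P, hP, fun uv huv ↦ (hb uv huv).trans hrs⟩

lemma matchingBounds_eq_univ_of_neg (X Y : PD) {r : ℝ} (hr : r ∈ matchingBounds X Y)
    (hneg : r < 0) : matchingBounds X Y = univ := by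
  obtain ⟨P, hP, hb⟩ := hr
  have hP0 : P = 0 := Multiset.eq_zero_of_forall_notMem fun uv huv ↦
    (pairCost_nonneg uv.1 uv.2).not_gt ((hb uv huv).trans_lt hneg)
  subst hP0
  exact eq_univ_of_forall fun _ ↦ ⟨0, hP, by simp⟩

lemma bottleneckDist_eq_sInf_matchingBounds (X Y : PD) :
    bottleneckDist X Y = sInf (matchingBounds X Y) := rfl

lemma bottleneckDist_nonneg (X Y : PD) : 0 ≤ bottleneckDist X Y := by
  rw [bottleneckDist_eq_sInf_matchingBounds]
  by_cases h : ∃ r ∈ matchingBounds X Y, r < 0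
  · obtain ⟨r, hr, hneg⟩ := h
    rw [matchingBounds_eq_univ_of_neg X Y hr hneg, Real.sInf_univ]
  · push Not at h
    exact Real.sInf_nonneg h

lemma bprofile_eq_zero_iff (X Y : PD) (t : ℝ) :
    bprofile X Y t = 0 ↔ t ∈ matchingBounds X Y := by
  simp only [matchingBounds, mem_ofPred_eq]
  constructor
  · intro h
    obtain ⟨⟨P, hP⟩, hlt⟩ := iInf_eq_bot.1 h 1 (by simp)
    simp only [Nat.cast_lt_one, Multiset.countP_eq_zero, not_lt] at hlt
    exact ⟨P, hP, hlt⟩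
  · rintro ⟨P, hP, hb⟩
    refine nonpos_iff_eq_zero.1 (iInf_le_of_le ⟨P, hP⟩ ?_)
    simp only [nonpos_iff_eq_zero, Nat.cast_eq_zero, Multiset.countP_eq_zero, not_lt]
    exact hb

/-- The bottleneck distance is the vanishing point of the bottleneck profile:
`W_∞(X,Y) = inf {t > 0 : D_{X,Y}(t) = 0}`; in particular `D_{X,Y}(t) = 0` for every
`t > W_∞(X,Y)`. -/
theorem bottleneckDist_eq_inf_bprofile_zero (X Y : PD) :
    bottleneckDist X Y = sInf {t : ℝ | 0 < t ∧ bprofile X Y t = 0} ∧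
    ∀ t : ℝ, bottleneckDist X Y < t → bprofile X Y t = 0 := by
  have hup := isUpperSet_matchingBounds X Y
  have hne := matchingBounds_nonempty X Y
  have hzero : {t : ℝ | 0 < t ∧ bprofile X Y t = 0} = Ioi 0 ∩ matchingBounds X Y := by
    ext t
    simp only [mem_ofPred_eq, mem_inter_iff, mem_Ioi, bprofile_eq_zero_iff]
  rw [hzero, bottleneckDist_eq_sInf_matchingBounds]
  refine ⟨(hup.csInf_Ioi_inter hne (bottleneckDist_nonneg X Y)).symm, fun t ht ↦ ?_⟩
  exact (bprofile_eq_zero_iff X Y t).2 (hup.Ioi_csInf_subset hne ht)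
end

section
/- For any three persistence diagrams X, Y, Z and all s, t ≥ 0, the bottleneck profiles satisfy the scaled triangle inequality D_{X,Z}(s + t) ≤ D_{X,Y}(s) + D_{Y,Z}(t). -/
open scoped ENNReal Classical

/-!
Pass to partial matchings: a multiset `M` of matched pairs together with the unmatched points
`U`, `V` of either diagram, each of which is sent to its nearest diagonal point. A matching reduces
to a partial one without raising the count at threshold `t` (pairs of diagonal points are dropped,
and an off-diagonal point is no closer to any diagonal point than to its projection); conversely a
partial matching extends to a matching with the same count once `t ≥ 0`, by pairing the
projections of matched pairs with each other. Partial matchings compose along the middle diagram: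
chains `x ↦ y ↦ z` become `x ↦ z`, and a point whose partner is unmatched in the other matching
becomes unmatched. By the triangle inequality and `d(x, Δ) ≤ d(x, y) + d(y, Δ)`, every pair counted
at threshold `s + t` is charged to a pair counted at `s` or at `t`.
-/

open Multiset

lemma ite_one_le_add_ite_one {P Q R : Prop} [Decidable P] [Decidable Q] [Decidable R]
    (h : P → Q ∨ R) :
    (if P then 1 else 0 : ℕ) ≤ (if Q then 1 else 0) + if R then 1 else 0 := by
  by_cases hP : P <;> by_cases hQ : Q <;> by_cases hR : R <;> simp_all

namespace Multiset

variable {β : Type*} {p q r : β → Prop} [DecidablePred p] [DecidablePred q] [DecidablePred r]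

lemma countP_le_add_countP {s : Multiset β} (h : ∀ a ∈ s, p a → q a ∨ r a) :
    s.countP p ≤ s.countP q + s.countP r := by
  induction s using Multiset.induction_on with
  | empty => simp
  | cons a s ih =>
    simp only [countP_cons]
    have := ite_one_le_add_ite_one (h a (mem_cons_self a s))
    have := ih fun b hb => h b (mem_cons_of_mem hb)
    omega

lemma countP_mono_left {s : Multiset β} (h : ∀ a ∈ s, p a → q a) : s.countP p ≤ s.countP q :=
  Quot.inductionOn s (fun _ h => List.countP_mono_left (by simpa using h)) h

lemma countP_map_eq {γ : Type*} (f : β → γ) (s : Multiset β) (p : γ → Prop) [DecidablePred p] :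
    (s.map f).countP p = s.countP (fun a => p (f a)) := by
  rw [countP_map, countP_eq_card_filter]

end Multiset

section PartialMatching

variable {α : Type*} [PseudoMetricSpace α] (δ : α → ℝ)

/-- The cost at threshold `t` of a partial matching: `M` holds the matched pairs, while the
points of `U` (left) and `V` (right) are left unmatched and sent to the diagonal at cost `δ`. -/
noncomputable def partialCost (t : ℝ) (M : Multiset (α × α)) (U V : Multiset α) : ℕ :=
  M.countP (fun e => t < dist e.1 e.2) + U.countP (t < δ ·) + V.countP (t < δ ·)

variable {δ}

theorem exists_partialCost_comp_le (hδ : ∀ x y, δ x ≤ dist x y + δ y) {s t : ℝ}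
    (hs : 0 ≤ s) (ht : 0 ≤ t) {M₁ : Multiset (α × α)} {U₁ V₁ : Multiset α}
    {M₂ : Multiset (α × α)} {U₂ V₂ : Multiset α}
    (h : M₁.map Prod.snd + V₁ = M₂.map Prod.fst + U₂) :
    ∃ M U V, M.map Prod.fst + U = M₁.map Prod.fst + U₁ ∧
      M.map Prod.snd + V = M₂.map Prod.snd + V₂ ∧
      partialCost δ (s + t) M U V ≤ partialCost δ s M₁ U₁ V₁ + partialCost δ t M₂ U₂ V₂ := by
  induction M₁ using Multiset.induction_on generalizing M₂ U₂ with
  | empty =>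
    refine ⟨0, U₁, M₂.map Prod.snd + V₂, by simp, by simp, ?_⟩
    rw [map_zero, zero_add] at h
    -- each `z` matched by `M₂` to some `y ∈ V₁` is sent to the diagonal
    have hU₁ : U₁.countP (s + t < δ ·) ≤ U₁.countP (s < δ ·) :=
      countP_mono_left fun x _ hx => by linarith
    have hV₂ : V₂.countP (s + t < δ ·) ≤ V₂.countP (t < δ ·) :=
      countP_mono_left fun x _ hx => by linarith
    have hM₂ : (M₂.map Prod.snd).countP (s + t < δ ·) ≤
        M₂.countP (fun e => t < dist e.1 e.2) + (M₂.map Prod.fst).countP (s < δ ·) := by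
      rw [countP_map_eq, countP_map_eq]
      refine countP_le_add_countP fun e _ he => (lt_or_lt_of_add_lt_add ?_).symm
      linarith [hδ e.2 e.1, dist_comm e.1 e.2]
    simp only [partialCost, h, countP_add, countP_zero]
    omega
  | cons a M₁ ih =>
    obtain ⟨x, y⟩ := a
    rw [map_cons, cons_add] at h
    rcases mem_add.1 (h ▸ mem_cons_self y _ : y ∈ M₂.map Prod.fst + U₂) with hy | hy
    · obtain ⟨⟨y', z⟩, hb, rfl⟩ := mem_map.1 hy
      obtain ⟨M₂, rfl⟩ := exists_cons_of_mem hb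
      rw [map_cons, cons_add, cons_inj_right] at h
      obtain ⟨M, U, V, hMU, hMV, hc⟩ := ih h
      refine ⟨(x, z) ::ₘ M, U, V, by simp [hMU], by simp [hMV], ?_⟩
      have := ite_one_le_add_ite_one (P := s + t < dist x z) fun hxz =>
        lt_or_lt_of_add_lt_add (hxz.trans_le (dist_triangle x y' z))
      simp only [partialCost, countP_cons] at hc ⊢
      omega
    · obtain ⟨U₂, rfl⟩ := exists_cons_of_mem hy
      rw [add_cons, cons_inj_right] at h
      obtain ⟨M, U, V, hMU, hMV, hc⟩ := ih h
      refine ⟨M, x ::ₘ U, V, by simp [hMU], hMV, ?_⟩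
      have := ite_one_le_add_ite_one (P := s + t < δ x) fun hx =>
        lt_or_lt_of_add_lt_add (hx.trans_le (hδ x y))
      simp only [partialCost, countP_cons] at hc ⊢
      omega

end PartialMatching

noncomputable def diagDist (u : ℝ × ℝ) : ℝ := dist u (diagProj u)

lemma diagDist_le_dist {u v : ℝ × ℝ} (hv : v.1 = v.2) : diagDist u ≤ dist u v := by
  simp only [diagDist, diagProj, Prod.dist_eq, Real.dist_eq]
  have := le_max_left |u.1 - v.1| |u.2 - v.2|
  have := le_max_right |u.1 - v.1| |u.2 - v.2|
  refine max_le ?_ ?_ <;> rw [abs_le] <;> constructor <;>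
    linarith [le_abs_self (u.1 - v.1), neg_abs_le (u.1 - v.1), le_abs_self (u.2 - v.2),
      neg_abs_le (u.2 - v.2)]

lemma diagDist_le_dist_add (u v : ℝ × ℝ) : diagDist u ≤ dist u v + diagDist v :=
  (diagDist_le_dist rfl).trans (dist_triangle u v (diagProj v))

lemma pairCost_le_dist (u v : ℝ × ℝ) : pairCost u v ≤ dist u v := by
  unfold pairCost
  split_ifs
  exacts [dist_nonneg, le_rfl]

lemma pairCost_diagProj (u v : ℝ × ℝ) : pairCost (diagProj u) (diagProj v) = 0 :=
  if_pos ⟨rfl, rfl⟩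

lemma pairCost_of_not_diag_left {u : ℝ × ℝ} (hu : u.1 ≠ u.2) (v : ℝ × ℝ) :
    pairCost u v = dist u v :=
  if_neg fun h => hu h.1

lemma pairCost_of_not_diag_right (u : ℝ × ℝ) {v : ℝ × ℝ} (hv : v.1 ≠ v.2) :
    pairCost u v = dist u v :=
  if_neg fun h => hv h.2

theorem bprofile_le_partialCost {X Y : PD} {M : Multiset ((ℝ × ℝ) × (ℝ × ℝ))}
    {U V : Multiset (ℝ × ℝ)} (hX : M.map Prod.fst + U = X.pts) (hY : M.map Prod.snd + V = Y.pts)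
    {t : ℝ} (ht : 0 ≤ t) : bprofile X Y t ≤ partialCost diagDist t M U V := by
  let P := M + M.map (fun e => (diagProj e.2, diagProj e.1)) + U.map (fun u => (u, diagProj u)) +
    V.map (fun v => (diagProj v, v))
  have hP : IsMatching X Y P := by
    constructor <;> simp only [P, ← hX, ← hY, Multiset.map_add, map_map, Function.comp_def,
      map_id'] <;> abel
  refine (iInf_le _ ⟨P, hP⟩).trans (Nat.cast_le.2 ?_)
  have hM : M.countP (fun e => t < pairCost e.1 e.2) ≤ M.countP (fun e => t < dist e.1 e.2) :=
    countP_mono_left fun e _ he => he.trans_le (pairCost_le_dist _ _)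
  have hU : U.countP (fun u => t < pairCost u (diagProj u)) ≤ U.countP (t < diagDist ·) :=
    countP_mono_left fun u _ hu => hu.trans_le (pairCost_le_dist _ _)
  have hV : V.countP (fun v => t < pairCost (diagProj v) v) ≤ V.countP (t < diagDist ·) :=
    countP_mono_left fun v _ hv => by
      rw [diagDist, dist_comm]; exact hv.trans_le (pairCost_le_dist _ _)
  have hdiag : M.countP (fun e => t < pairCost (diagProj e.2) (diagProj e.1)) = 0 :=
    countP_eq_zero.2 fun e _ => by simpa [pairCost_diagProj] using ht
  simp only [P, partialCost, countP_add, countP_map_eq, hdiag]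
  omega

lemma map_filter_not_diag {β : Type*} {P : Multiset β} {f : β → ℝ × ℝ} {X : PD}
    {S : Multiset (ℝ × ℝ)} (h : P.map f = X.pts + S.map diagProj) :
    (P.filter fun e => ¬(f e).1 = (f e).2).map f = X.pts :=
  calc (P.filter fun e => ¬(f e).1 = (f e).2).map f = (P.map f).filter (fun u => ¬u.1 = u.2) :=
        by rw [filter_map]; rfl
    _ = X.pts := by
      rw [h, filter_add, filter_eq_self.2 fun u hu => (X.birth_lt_death u hu).ne,
        filter_eq_nil.2 fun u hu => ?_, add_zero]
      obtain ⟨w, -, rfl⟩ := mem_map.1 hu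
      exact not_not.2 rfl

theorem IsMatching.exists_partialCost_le {X Y : PD} {P : Multiset ((ℝ × ℝ) × (ℝ × ℝ))}
    (hP : IsMatching X Y P) (t : ℝ) :
    ∃ M U V, M.map Prod.fst + U = X.pts ∧ M.map Prod.snd + V = Y.pts ∧
      partialCost diagDist t M U V ≤ P.countP (fun e => t < pairCost e.1 e.2) := by
  -- `Pₗ₀` holds the pairs with only their left end off the diagonal, `P₀ᵣ` the reverse
  set Pₗ := P.filter fun e => ¬e.1.1 = e.1.2
  set Pᵣ := P.filter fun e => ¬e.2.1 = e.2.2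
  set M := Pₗ.filter fun e => ¬e.2.1 = e.2.2
  set Pₗ₀ := Pₗ.filter fun e => e.2.1 = e.2.2
  set P₀ᵣ := Pᵣ.filter fun e => e.1.1 = e.1.2
  have hM : M = Pᵣ.filter fun e => ¬e.1.1 = e.1.2 := filter_comm _ _ _
  have hP₀ᵣ : P₀ᵣ = (P.filter fun e => e.1.1 = e.1.2).filter fun e => ¬e.2.1 = e.2.2 :=
    filter_comm _ _ _
  refine ⟨M, Pₗ₀.map Prod.fst, P₀ᵣ.map Prod.snd, ?_, ?_, ?_⟩
  · calc M.map Prod.fst + Pₗ₀.map Prod.fst = Pₗ.map Prod.fst := by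
          rw [← Multiset.map_add, add_comm, filter_add_not]
      _ = X.pts := map_filter_not_diag hP.1
  · calc M.map Prod.snd + P₀ᵣ.map Prod.snd = Pᵣ.map Prod.snd := by
          rw [hM, ← Multiset.map_add, add_comm, filter_add_not]
      _ = Y.pts := map_filter_not_diag hP.2
  have hMc : M.countP (fun e => t < dist e.1 e.2) ≤ M.countP (fun e => t < pairCost e.1 e.2) :=
    countP_mono_left fun e he h => by
      rwa [pairCost_of_not_diag_left (mem_filter.1 (mem_filter.1 he).1).2]
  have hUc : (Pₗ₀.map Prod.fst).countP (t < diagDist ·) ≤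
      Pₗ₀.countP (fun e => t < pairCost e.1 e.2) := by
    rw [countP_map_eq]
    refine countP_mono_left fun e he h => ?_
    obtain ⟨⟨-, hl⟩, hr⟩ := mem_filter.1 he |>.imp_left mem_filter.1
    rw [pairCost_of_not_diag_left hl]
    exact h.trans_le (diagDist_le_dist hr)
  have hVc : (P₀ᵣ.map Prod.snd).countP (t < diagDist ·) ≤
      P₀ᵣ.countP (fun e => t < pairCost e.1 e.2) := by
    rw [countP_map_eq]
    refine countP_mono_left fun e he h => ?_
    obtain ⟨⟨-, hr⟩, hl⟩ := mem_filter.1 he |>.imp_left mem_filter.1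
    rw [pairCost_of_not_diag_right _ hr, dist_comm]
    exact h.trans_le (diagDist_le_dist hl)
  have hP₀ᵣc := countP_le_of_le (fun e => t < pairCost e.1 e.2) (hP₀ᵣ ▸ filter_le _ _)
  have hsplit : P.countP (fun e => t < pairCost e.1 e.2) =
      (P.filter fun e => e.1.1 = e.1.2).countP (fun e => t < pairCost e.1 e.2) +
        Pₗ.countP (fun e => t < pairCost e.1 e.2) :=
    countP_eq_countP_filter_add _ _ _
  have hsplitₗ : Pₗ.countP (fun e => t < pairCost e.1 e.2) =
      Pₗ₀.countP (fun e => t < pairCost e.1 e.2) + M.countP (fun e => t < pairCost e.1 e.2) :=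
    countP_eq_countP_filter_add _ _ _
  simp only [partialCost]
  omega

/-- The scaled triangle inequality for bottleneck profiles:
`D_{X,Z}(s + t) ≤ D_{X,Y}(s) + D_{Y,Z}(t)`. -/
theorem bprofile_triangle (X Y Z : PD) (s t : ℝ) (hs : 0 ≤ s) (ht : 0 ≤ t) :
    bprofile X Z (s + t) ≤ bprofile X Y s + bprofile Y Z t := by
  rw [bprofile.eq_1 X Y s, ENNReal.iInf_add]
  refine le_iInf fun ⟨P, hP⟩ => ?_
  rw [bprofile.eq_1 Y Z t, ENNReal.add_iInf]
  refine le_iInf fun ⟨Q, hQ⟩ => ?_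
  obtain ⟨M₁, U₁, V₁, hX₁, hY₁, hc₁⟩ := hP.exists_partialCost_le s
  obtain ⟨M₂, U₂, V₂, hY₂, hZ₂, hc₂⟩ := hQ.exists_partialCost_le t
  obtain ⟨M, U, V, hX, hZ, hc⟩ :=
    exists_partialCost_comp_le diagDist_le_dist_add hs ht (hY₁.trans hY₂.symm)
  calc bprofile X Z (s + t) ≤ partialCost diagDist (s + t) M U V :=
        bprofile_le_partialCost (hX.trans hX₁) (hZ.trans hZ₂) (add_nonneg hs ht)
    _ ≤ _ := by exact_mod_cast hc.trans (add_le_add hc₁ hc₂)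
end

section
/- The bottleneck profile satisfies D_{X,X}(t) = 0 for every persistence diagram X and every t > 0. Moreover, if X, Y ∈ B̄ satisfy D_{X,Y}(t) = 0 for every t > 0, then X = Y. -/
open scoped ENNReal Classical

/-- A diagram in the class `B̄`: a countable multiset of points in the closed half-plane
`{(b, d) : b ≤ d}` (represented as an `ℕ`-indexed family; points on the diagonal, of which
countably many copies are freely available for matching, are allowed and serve to pad
finite diagrams), such that for every `ε > 0` only finitely many points lie at distance
greater than `ε` from the diagonal `Δ`. -/
structure BarB where
  pts : ℕ → ℝ × ℝ
  birth_le_death : ∀ n, (pts n).1 ≤ (pts n).2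
  finitePers : ∀ ε : ℝ, 0 < ε → {n | ε < dist (pts n) (diagProj (pts n))}.Finite

/-- The domain `X₀ ⊔ Y₀'` of a matching between diagrams `X, Y ∈ B̄`. -/
noncomputable def matchDom (X Y : BarB) : ℕ ⊕ ℕ → ℝ × ℝ
  | Sum.inl n => X.pts n
  | Sum.inr n => diagProj (Y.pts n)

/-- The codomain `Y₀ ⊔ X₀'` of a matching between diagrams `X, Y ∈ B̄`. -/
noncomputable def matchCod (X Y : BarB) : ℕ ⊕ ℕ → ℝ × ℝ
  | Sum.inl n => Y.pts n
  | Sum.inr n => diagProj (X.pts n)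

/-- The bottleneck profile `D_{X,Y}(t) = inf_η |{u : d(u, η u) > t}|` for diagrams in `B̄`;
matchings are bijections `η : X₀ ⊔ Y₀' → Y₀ ⊔ X₀'`. -/
noncomputable def bprofileB (X Y : BarB) (t : ℝ) : ℝ≥0∞ :=
  ⨅ e : ℕ ⊕ ℕ ≃ ℕ ⊕ ℕ,
    ({i | t < pairCost (matchDom X Y i) (matchCod X Y (e i))}.encard : ℝ≥0∞)

/-- The `f`-Prokhorov distance `π_f(X,Y) = inf {t > 0 : D_{X,Y}(t) < f(t)}` on `B̄`. -/
noncomputable def prokhorovB (f : ℝ → ℝ) (X Y : BarB) : ℝ≥0∞ :=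
  ⨅ t : {t : ℝ // 0 < t ∧ bprofileB X Y t < ENNReal.ofReal (f t)}, ENNReal.ofReal t.1

/-- The indices of the off-diagonal points of a diagram in `B̄`. -/
def BarB.offDiag (X : BarB) : Set ℕ := {n | (X.pts n).1 < (X.pts n).2}

/-- Equality of diagrams in `B̄` as multisets of off-diagonal points: there is a bijection
between the off-diagonal points of `X` and those of `Y` matching equal points. -/
def BarB.MEquiv (X Y : BarB) : Prop :=
  ∃ σ : X.offDiag ≃ Y.offDiag, ∀ n : X.offDiag, Y.pts (σ n : ℕ) = X.pts (n : ℕ)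

/-- The `p`-Wasserstein distance `W_p(X,Y) = inf_η (Σ_u d(u, η u)^p)^(1/p)` on `B̄`. -/
noncomputable def wassersteinB (p : ℝ) (X Y : BarB) : ℝ≥0∞ :=
  ⨅ e : ℕ ⊕ ℕ ≃ ℕ ⊕ ℕ,
    (∑' i, ENNReal.ofReal (pairCost (matchDom X Y i) (matchCod X Y (e i)) ^ p)) ^ (1 / p)

/-- The empty persistence diagram, viewed in `B̄` (only diagonal padding points). -/
noncomputable def emptyB : BarB where
  pts _ := (0, 0)
  birth_le_death _ := le_refl 0
  finitePers ε hε := by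
    have : {n : ℕ | ε < dist ((0 : ℝ), (0 : ℝ)) (diagProj (0, 0))} = ∅ := by
      ext n
      simp [diagProj]
      linarith
    simp only [this]
    exact Set.finite_empty
/-!
A matching whose pairs are all at distance at most `t`, with `t` below the distance of an
off-diagonal point `z` to the diagonal and below the gap separating `z` from the other points of
`X` and `Y` (such a gap exists because only finitely many points of a diagram in `B̄` are far from
the diagonal), must send the copies of `z` in `X` to copies of `z` in `Y`, and its inverse does
the converse. Schröder–Bernstein turns these injections into a bijection between the fibres over
`z`, and the fibrewise bijections assemble into a bijection of the off-diagonal points.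
For `D_{X,X}` the identity matching has cost zero.
-/

lemma pairCost_self (x : ℝ × ℝ) : pairCost x x = 0 := by
  simp [pairCost]

lemma pairCost_comm (u v : ℝ × ℝ) : pairCost u v = pairCost v u := by
  simp only [pairCost, and_comm, dist_comm]

lemma pairCost_eq_dist_of_lt {u : ℝ × ℝ} (hu : u.1 < u.2) (v : ℝ × ℝ) :
    pairCost u v = dist u v :=
  if_neg fun h => hu.ne h.1

lemma isMatching_diag (X : PD) :
    IsMatching X X ((X.pts + X.pts.map diagProj).map fun x => (x, x)) := by
  constructor <;> simp [Multiset.map_map]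

lemma bprofile_self (X : PD) {t : ℝ} (ht : 0 ≤ t) : bprofile X X t = 0 := by
  refine le_antisymm ((iInf_le _ ⟨_, isMatching_diag X⟩).trans_eq ?_) zero_le
  simp [Multiset.countP_map, pairCost_self, not_lt.mpr ht]

lemma half_sub_le_dist_of_fst_eq_snd (z : ℝ × ℝ) {w : ℝ × ℝ} (hw : w.1 = w.2) :
    (z.2 - z.1) / 2 ≤ dist z w := by
  have h := Prod.dist_eq (x := z) (y := w)
  rw [Real.dist_eq, Real.dist_eq] at h
  linarith [le_max_left |z.1 - w.1| |z.2 - w.2|, le_max_right |z.1 - w.1| |z.2 - w.2|,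
    neg_abs_le (z.1 - w.1), le_abs_self (z.2 - w.2)]

namespace BarB

/-- The points of `Z` within `(z.2 - z.1) / 4` of `z` are far from the diagonal, hence finitely
many. -/
lemma exists_pos_pts_eq_of_dist_le (Z : BarB) {z : ℝ × ℝ} (hz : z.1 < z.2) :
    ∃ t, 0 < t ∧ t < (z.2 - z.1) / 2 ∧ ∀ m, dist (Z.pts m) z ≤ t → Z.pts m = z := by
  set δ := (z.2 - z.1) / 4 with hδ
  have hδ0 : 0 < δ := by linarith
  set S := {m | δ < dist (Z.pts m) (diagProj (Z.pts m))}
  have hclosed : IsClosed (Z.pts '' S \ {z}) :=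
    ((Z.finitePers δ hδ0).image _ |>.sdiff).isClosed
  obtain ⟨ε, hε, hball⟩ := Metric.isOpen_iff.mp hclosed.isOpen_compl z (by simp)
  refine ⟨min (ε / 2) (δ / 2), by positivity, by linarith [min_le_right (ε / 2) (δ / 2)], ?_⟩
  intro m hm
  have hmS : m ∈ S := by
    have := half_sub_le_dist_of_fst_eq_snd z (w := diagProj (Z.pts m)) rfl
    have := dist_triangle_left z (diagProj (Z.pts m)) (Z.pts m)
    have := min_le_right (ε / 2) (δ / 2)
    show δ < _
    linarith
  have hmball : Z.pts m ∈ Metric.ball z ε :=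
    Metric.mem_ball.mpr (hm.trans_lt (by linarith [min_le_left (ε / 2) (δ / 2)]))
  by_contra hne
  exact hball hmball ⟨⟨m, hmS, rfl⟩, hne⟩

end BarB

lemma matchDom_swap (X Y : BarB) : matchDom Y X = matchCod X Y := by
  ext (n | n) <;> rfl

lemma matchCod_swap (X Y : BarB) : matchCod Y X = matchDom X Y := by
  ext (n | n) <;> rfl

lemma exists_equiv_pairCost_le_of_bprofileB_eq_zero {X Y : BarB} {t : ℝ}
    (h : bprofileB X Y t = 0) :
    ∃ e : ℕ ⊕ ℕ ≃ ℕ ⊕ ℕ, ∀ i, pairCost (matchDom X Y i) (matchCod X Y (e i)) ≤ t := by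
  obtain ⟨e, he⟩ := iInf_lt_iff.mp (h.trans_lt zero_lt_one : bprofileB X Y t < 1)
  refine ⟨e, fun i => not_lt.mp fun hi => he.not_ge ?_⟩
  exact_mod_cast Set.one_le_encard_iff_nonempty.mpr ⟨i, hi⟩

lemma pairCost_symm_le {X Y : BarB} {t : ℝ} {e : ℕ ⊕ ℕ ≃ ℕ ⊕ ℕ}
    (he : ∀ i, pairCost (matchDom X Y i) (matchCod X Y (e i)) ≤ t) (j : ℕ ⊕ ℕ) :
    pairCost (matchDom Y X j) (matchCod Y X (e.symm j)) ≤ t := by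
  rw [matchDom_swap X Y, matchCod_swap X Y, pairCost_comm]
  simpa using he (e.symm j)

lemma exists_apply_inl_eq_inl {X Y : BarB} {t : ℝ} {e : ℕ ⊕ ℕ ≃ ℕ ⊕ ℕ}
    (he : ∀ i, pairCost (matchDom X Y i) (matchCod X Y (e i)) ≤ t)
    {z : ℝ × ℝ} (hz : z.1 < z.2) (ht : t < (z.2 - z.1) / 2)
    (hiso : ∀ m, dist (Y.pts m) z ≤ t → Y.pts m = z) {n : ℕ} (hn : X.pts n = z) :
    ∃ m, e (Sum.inl n) = Sum.inl m ∧ Y.pts m = z := by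
  have hcost := he (Sum.inl n)
  rcases hem : e (Sum.inl n) with m | m <;>
    simp only [hem, matchDom, matchCod, hn, pairCost_eq_dist_of_lt hz] at hcost
  · exact ⟨m, rfl, hiso m (by rwa [dist_comm])⟩
  · linarith [half_sub_le_dist_of_fst_eq_snd z (w := diagProj (X.pts m)) rfl]

lemma nonempty_fiber_embedding {X Y : BarB} {t : ℝ} {e : ℕ ⊕ ℕ ≃ ℕ ⊕ ℕ}
    (he : ∀ i, pairCost (matchDom X Y i) (matchCod X Y (e i)) ≤ t)
    {z : ℝ × ℝ} (hz : z.1 < z.2) (ht : t < (z.2 - z.1) / 2)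
    (hiso : ∀ m, dist (Y.pts m) z ≤ t → Y.pts m = z) :
    Nonempty ({n // X.pts n = z} ↪ {m // Y.pts m = z}) := by
  choose f hfe hfz using fun n : {n // X.pts n = z} => exists_apply_inl_eq_inl he hz ht hiso n.2
  refine ⟨⟨fun n => ⟨f n, hfz n⟩, fun n n' hnn' => Subtype.ext ?_⟩⟩
  apply Sum.inl_injective (e.injective _)
  rw [hfe, hfe, Subtype.mk.inj hnn']

lemma nonempty_fiber_equiv {X Y : BarB} (H : ∀ t : ℝ, 0 < t → bprofileB X Y t = 0)
    {z : ℝ × ℝ} (hz : z.1 < z.2) :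
    Nonempty ({n // X.pts n = z} ≃ {m // Y.pts m = z}) := by
  obtain ⟨tX, htX0, htX, hisoX⟩ := X.exists_pos_pts_eq_of_dist_le hz
  obtain ⟨tY, htY0, htY, hisoY⟩ := Y.exists_pos_pts_eq_of_dist_le hz
  obtain ⟨e, he⟩ := exists_equiv_pairCost_le_of_bprofileB_eq_zero (H _ (lt_min htX0 htY0))
  obtain ⟨f⟩ := nonempty_fiber_embedding he hz ((min_le_right _ _).trans_lt htY)
    fun m hm => hisoY m (hm.trans (min_le_right _ _))
  obtain ⟨g⟩ := nonempty_fiber_embedding (pairCost_symm_le he) hz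
    ((min_le_left _ _).trans_lt htX) fun m hm => hisoX m (hm.trans (min_le_left _ _))
  exact f.antisymm g

namespace BarB

lemma mEquiv_of_fiber {X Y : BarB}
    (h : ∀ z : ℝ × ℝ, z.1 < z.2 → Nonempty ({n // X.pts n = z} ≃ {m // Y.pts m = z})) :
    X.MEquiv Y := by
  suffices e : ∀ z, {n : X.offDiag // X.pts n = z} ≃ {m : Y.offDiag // Y.pts m = z} from
    ⟨Equiv.ofFiberEquiv e, Equiv.ofFiberEquiv_map e⟩
  intro z
  by_cases hz : z.1 < z.2
  · have hX : ∀ {n}, X.pts n = z → n ∈ X.offDiag := fun hn => by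
      simpa [offDiag, hn] using hz
    have hY : ∀ {m}, Y.pts m = z → m ∈ Y.offDiag := fun hm => by
      simpa [offDiag, hm] using hz
    exact (Equiv.subtypeSubtypeEquivSubtype hX).trans
      ((h z hz).some.trans (Equiv.subtypeSubtypeEquivSubtype hY).symm)
  · have hempty : ∀ (W : BarB) (n : W.offDiag), W.pts n ≠ z := fun W n hn =>
      hz (hn ▸ n.2)
    exact @Equiv.equivOfIsEmpty _ _ ⟨fun n => hempty X n.1 n.2⟩ ⟨fun m => hempty Y m.1 m.2⟩

end BarB

/-- `D_{X,X}(t) = 0` for every persistence diagram `X` and every `t > 0`; moreover, if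
`X, Y ∈ B̄` satisfy `D_{X,Y}(t) = 0` for every `t > 0`, then `X = Y` (as multisets of
off-diagonal points). -/
theorem bprofile_self_eq_zero_and_definite :
    (∀ X : PD, ∀ t : ℝ, 0 < t → bprofile X X t = 0) ∧
    (∀ X Y : BarB, (∀ t : ℝ, 0 < t → bprofileB X Y t = 0) → BarB.MEquiv X Y) :=
  ⟨fun X _ ht => bprofile_self X ht.le,
    fun _ _ H => BarB.mEquiv_of_fiber fun _ hz => nonempty_fiber_equiv H hz⟩
end

section
/- Fix two persistence diagrams X, Y. Let f : [0,∞) → [0,∞) be superadditive with lim_{t→0⁺} f(t) = 0 and f(t) > 0 for all t > 0. Then for every ε > 0 there exists δ > 0 such that for every monotonically increasing g : [0,∞) → [0,∞) with ‖f − g‖_∞ < δ one has |π_f(X,Y) − π_g(X,Y)| < ε. -/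
open scoped ENNReal Classical

/-- The `f`-Prokhorov distance `π_f(X,Y) = inf {t > 0 : D_{X,Y}(t) < f(t)}`
(with value `∞` if no such `t` exists). -/
noncomputable def prokhorov (f : ℝ → ℝ) (X Y : PD) : ℝ≥0∞ :=
  ⨅ t : {t : ℝ // 0 < t ∧ bprofile X Y t < ENNReal.ofReal (f t)}, ENNReal.ofReal t.1

/-!
Superadditivity gives `f (t + ε/2) ≥ f t + f (ε/2)`, so if `‖f - g‖_∞ < f (ε/2)` then
`f t ≤ g (t + ε/2)` and `g t ≤ f (t + ε/2)`. Since the bottleneck profile is antitone, a witness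
`t` for `π_f` yields the witness `t + ε/2` for `π_g` and vice versa, hence the two distances
differ by at most `ε/2`. The same inequalities make `π_f` and `π_g` infinite together, so the
junk value `∞.toReal = 0` does no harm.
-/

lemma bprofile_antitone (X Y : PD) : Antitone (bprofile X Y) := by
  intro s t hst
  refine le_iInf fun P => iInf_le_of_le P ?_
  gcongr
  rw [Multiset.countP_eq_card_filter, Multiset.countP_eq_card_filter]
  exact Multiset.card_le_card
    (Multiset.monotone_filter_right _ fun _ h => lt_of_le_of_lt hst h)

lemma prokhorov_le_ofReal (X Y : PD) {f : ℝ → ℝ} {t : ℝ} (ht : 0 < t)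
    (hbt : bprofile X Y t < ENNReal.ofReal (f t)) : prokhorov f X Y ≤ ENNReal.ofReal t :=
  iInf_le_of_le ⟨t, ht, hbt⟩ le_rfl

lemma prokhorov_le_add_of_le_shift (X Y : PD) {f g : ℝ → ℝ} {c : ℝ} (hc : 0 ≤ c)
    (hfg : ∀ t, 0 < t → f t ≤ g (t + c)) :
    prokhorov g X Y ≤ prokhorov f X Y + ENNReal.ofReal c := by
  rw [prokhorov.eq_1 f, ENNReal.iInf_add]
  refine le_iInf fun ⟨t, ht, hbt⟩ => ?_
  rw [← ENNReal.ofReal_add ht.le hc]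
  refine prokhorov_le_ofReal X Y (by linarith) ?_
  calc bprofile X Y (t + c) ≤ bprofile X Y t := bprofile_antitone X Y (by linarith)
    _ < ENNReal.ofReal (f t) := hbt
    _ ≤ ENNReal.ofReal (g (t + c)) := ENNReal.ofReal_le_ofReal (hfg t ht)

lemma ENNReal.abs_toReal_sub_le_of_le_add {a b c : ℝ≥0∞} (hc : c ≠ ∞)
    (hab : a ≤ b + c) (hba : b ≤ a + c) : |a.toReal - b.toReal| ≤ c.toReal := by
  have top_of_top {x y : ℝ≥0∞} (hxy : x ≤ y + c) (hx : x = ∞) : y = ∞ := by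
    simpa [hx, hc] using hxy
  have ha := ENNReal.toReal_le_add' hab (top_of_top hba) (absurd · hc)
  have hb := ENNReal.toReal_le_add' hba (top_of_top hab) (absurd · hc)
  exact abs_sub_le_iff.mpr ⟨by linarith, by linarith⟩

lemma le_shift_of_abs_sub_lt_superadditive {f g : ℝ → ℝ} {c : ℝ} (hc : 0 ≤ c)
    (hf_superadd : ∀ s t, 0 ≤ s → 0 ≤ t → f s + f t ≤ f (s + t))
    (hfg : ∀ t, 0 ≤ t → |f t - g t| < f c) {t : ℝ} (ht : 0 ≤ t) :
    f t ≤ g (t + c) ∧ g t ≤ f (t + c) := by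
  have hshift := hf_superadd t c ht hc
  have hfg_t := abs_lt.mp (hfg t ht)
  have hfg_tc := abs_lt.mp (hfg (t + c) (by linarith))
  exact ⟨by linarith, by linarith⟩

theorem prokhorov_continuous_in_function_general (X Y : PD) (f : ℝ → ℝ)
    (hf_superadd : ∀ s t, 0 ≤ s → 0 ≤ t → f s + f t ≤ f (s + t))
    (hf_pos : ∀ t, 0 < t → 0 < f t) :
    ∀ ε : ℝ, 0 < ε → ∃ δ : ℝ, 0 < δ ∧ ∀ g : ℝ → ℝ,
      (∀ t, 0 ≤ t → 0 ≤ g t) → (∀ s t, 0 ≤ s → s ≤ t → g s ≤ g t) →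
      (∀ t, 0 ≤ t → |f t - g t| < δ) →
      |(prokhorov f X Y).toReal - (prokhorov g X Y).toReal| < ε := by
  intro ε hε
  have hε2 : 0 ≤ ε / 2 := by linarith
  refine ⟨f (ε / 2), hf_pos _ (by linarith), fun g _ _ hfg => ?_⟩
  have hshift t (ht : 0 < t) :=
    le_shift_of_abs_sub_lt_superadditive hε2 hf_superadd hfg ht.le
  have hg_le := prokhorov_le_add_of_le_shift X Y hε2 fun t ht => (hshift t ht).1
  have hf_le := prokhorov_le_add_of_le_shift X Y hε2 fun t ht => (hshift t ht).2
  calc |(prokhorov f X Y).toReal - (prokhorov g X Y).toReal|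
      ≤ (ENNReal.ofReal (ε / 2)).toReal :=
        ENNReal.abs_toReal_sub_le_of_le_add ENNReal.ofReal_ne_top hf_le hg_le
    _ < ε := by rw [ENNReal.toReal_ofReal hε2]; linarith

/-- Continuity in `f` of the `f`-Prokhorov distance for fixed diagrams `X, Y`: for
superadditive `f : [0,∞) → [0,∞)` with `lim_{t → 0⁺} f(t) = 0` and `f(t) > 0` for `t > 0`,
for every `ε > 0` there is `δ > 0` such that every monotonically increasing
`g : [0,∞) → [0,∞)` with `‖f - g‖_∞ < δ` satisfies `|π_f(X,Y) - π_g(X,Y)| < ε`. -/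
theorem prokhorov_continuous_in_function (X Y : PD) (f : ℝ → ℝ)
    (hf_nonneg : ∀ t, 0 ≤ t → 0 ≤ f t)
    (hf_superadd : ∀ s t, 0 ≤ s → 0 ≤ t → f s + f t ≤ f (s + t))
    (hf_lim : Filter.Tendsto f (nhdsWithin 0 (Set.Ioi 0)) (nhds 0))
    (hf_pos : ∀ t, 0 < t → 0 < f t) :
    ∀ ε : ℝ, 0 < ε → ∃ δ : ℝ, 0 < δ ∧ ∀ g : ℝ → ℝ,
      (∀ t, 0 ≤ t → 0 ≤ g t) → (∀ s t, 0 ≤ s → s ≤ t → g s ≤ g t) →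
      (∀ t, 0 ≤ t → |f t - g t| < δ) →
      |(prokhorov f X Y).toReal - (prokhorov g X Y).toReal| < ε :=
  prokhorov_continuous_in_function_general X Y f hf_superadd hf_pos
end

section
/- Let f : [0,∞) → [0,∞) be monotonically increasing and let ε > 0 satisfy f(ε) ≤ 1. If X, Y are persistence diagrams with π_f(X,Y) < ε, then D_{X,Y}(ε) = 0 and consequently W_∞(X,Y) ≤ ε; that is, at small scales the f-Prokhorov distance and the bottleneck distance coincide. -/
open scoped ENNReal Classical

/-! A scale `t < ε` with `D_{X,Y}(t) < f(t) ≤ f(ε) ≤ 1` exists. The bottleneck profile is an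
infimum of natural numbers, so `D_{X,Y}(t) < 1` is attained by a matching moving no point by more
than `t`; that matching witnesses both `D_{X,Y}(ε) = 0` and `W_∞(X,Y) ≤ ε`. -/

lemma exists_scale_of_prokhorov_lt {f : ℝ → ℝ} {X Y : PD} {ε : ℝ}
    (h : prokhorov f X Y < ENNReal.ofReal ε) :
    ∃ t, 0 < t ∧ t < ε ∧ bprofile X Y t < ENNReal.ofReal (f t) := by
  obtain ⟨⟨t, ht, htf⟩, htε⟩ := iInf_lt_iff.mp h
  exact ⟨t, ht, (ENNReal.ofReal_lt_ofReal_iff'.mp htε).1, htf⟩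

lemma exists_matching_pairCost_le_of_bprofile_lt_one {X Y : PD} {t : ℝ}
    (h : bprofile X Y t < 1) :
    ∃ P, IsMatching X Y P ∧ ∀ uv ∈ P, pairCost uv.1 uv.2 ≤ t := by
  obtain ⟨⟨P, hP⟩, hPt⟩ := iInf_lt_iff.mp h
  have hcount : Multiset.countP (fun uv => t < pairCost uv.1 uv.2) P = 0 :=
    Nat.cast_lt_one.mp hPt
  exact ⟨P, hP, fun uv huv => not_lt.mp (Multiset.countP_eq_zero.mp hcount uv huv)⟩

lemma bprofile_eq_zero_of_matching {X Y : PD} {P : Multiset ((ℝ × ℝ) × (ℝ × ℝ))} {t : ℝ}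
    (hP : IsMatching X Y P) (hle : ∀ uv ∈ P, pairCost uv.1 uv.2 ≤ t) :
    bprofile X Y t = 0 := by
  have hcount : Multiset.countP (fun uv => t < pairCost uv.1 uv.2) P = 0 :=
    Multiset.countP_eq_zero.mpr fun uv huv => not_lt.mpr (hle uv huv)
  refine le_antisymm ?_ zero_le
  calc bprofile X Y t
      ≤ (Multiset.countP (fun uv => t < pairCost uv.1 uv.2) P : ℝ≥0∞) :=
        iInf_le (fun Q : {Q // IsMatching X Y Q} => _) ⟨P, hP⟩
    _ = 0 := by rw [hcount, Nat.cast_zero]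

-- `0 ≤ r` is needed for empty diagrams: then every `r` bounds the empty matching, and `sInf` of
-- that unbounded set is the junk value `0`.
lemma bottleneckDist_le_of_matching {X Y : PD} {P : Multiset ((ℝ × ℝ) × (ℝ × ℝ))} {r : ℝ}
    (hr : 0 ≤ r) (hP : IsMatching X Y P) (hle : ∀ uv ∈ P, pairCost uv.1 uv.2 ≤ r) :
    bottleneckDist X Y ≤ r := by
  by_cases hb : BddBelow {r : ℝ | ∃ P, IsMatching X Y P ∧ ∀ uv ∈ P, pairCost uv.1 uv.2 ≤ r}
  · exact csInf_le hb ⟨P, hP, hle⟩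
  · rw [bottleneckDist, Real.sInf_of_not_bddBelow hb]
    exact hr

theorem prokhorov_small_scale_bottleneck_general (f : ℝ → ℝ)
    (hf_mono : ∀ s t, 0 ≤ s → s ≤ t → f s ≤ f t)
    (ε : ℝ) (hfε : f ε ≤ 1)
    (X Y : PD) (h : prokhorov f X Y < ENNReal.ofReal ε) :
    bprofile X Y ε = 0 ∧ bottleneckDist X Y ≤ ε := by
  obtain ⟨t, ht, htε, htf⟩ := exists_scale_of_prokhorov_lt h
  have hprofile : bprofile X Y t < 1 :=
    calc bprofile X Y t < ENNReal.ofReal (f t) := htf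
      _ ≤ ENNReal.ofReal 1 := ENNReal.ofReal_le_ofReal ((hf_mono t ε ht.le htε.le).trans hfε)
      _ = 1 := ENNReal.ofReal_one
  obtain ⟨P, hP, hle⟩ := exists_matching_pairCost_le_of_bprofile_lt_one hprofile
  have hleε : ∀ uv ∈ P, pairCost uv.1 uv.2 ≤ ε := fun uv huv => (hle uv huv).trans htε.le
  exact ⟨bprofile_eq_zero_of_matching hP hleε,
    bottleneckDist_le_of_matching (ht.trans htε).le hP hleε⟩

/-- At small scales the `f`-Prokhorov and bottleneck distances coincide: if `f` is
monotonically increasing, `ε > 0` satisfies `f(ε) ≤ 1` and `π_f(X,Y) < ε`, then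
`D_{X,Y}(ε) = 0` and consequently `W_∞(X,Y) ≤ ε`. -/
theorem prokhorov_small_scale_bottleneck (f : ℝ → ℝ)
    (hf_nonneg : ∀ t, 0 ≤ t → 0 ≤ f t)
    (hf_mono : ∀ s t, 0 ≤ s → s ≤ t → f s ≤ f t)
    (ε : ℝ) (hε : 0 < ε) (hfε : f ε ≤ 1)
    (X Y : PD) (h : prokhorov f X Y < ENNReal.ofReal ε) :
    bprofile X Y ε = 0 ∧ bottleneckDist X Y ≤ ε :=
  prokhorov_small_scale_bottleneck_general f hf_mono ε hfε X Y h
end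

section
/- Let X, Y be finite persistence diagrams and t ≥ 0. Let G = (U ⊔ V, E) be the bipartite graph with U = X₀ ⊔ Y₀', V = Y₀ ⊔ X₀', and an edge {u,v} ∈ E if and only if one of the following holds: u ∈ X₀, v ∈ Y₀ and d(u,v) ≤ t; u ∈ X₀, v ∈ X₀' is its diagonal projection and d(u,v) ≤ t; v ∈ Y₀, u ∈ Y₀' is its diagonal projection and d(u,v) ≤ t; or u ∈ Y₀' and v ∈ X₀'. Then the maximum cardinality M of a matching in G satisfies M = sup_η |{u : d(u,η(u)) ≤ t}|, where the supremum is over all matchings η between X and Y; equivalently, D_{X,Y}(t) = |X₀| + |Y₀| − M. -/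
open scoped ENNReal Classical

/-- The edge relation of the bipartite graph `G = (U ⊔ V, E)` with `U = X₀ ⊔ Y₀'` and
`V = Y₀ ⊔ X₀'`, for diagrams with off-diagonal points `x : Fin a → ℝ × ℝ` and
`y : Fin b → ℝ × ℝ`: off-diagonal points are joined if their distance is `≤ t`, a point is
joined to its own diagonal projection if their distance is `≤ t`, and projections in `Y₀'`
are always joined to projections in `X₀'`. -/
noncomputable def GEdge {a b : ℕ} (x : Fin a → ℝ × ℝ) (y : Fin b → ℝ × ℝ) (t : ℝ) :
    Fin a ⊕ Fin b → Fin b ⊕ Fin a → Prop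
  | Sum.inl i, Sum.inl j => dist (x i) (y j) ≤ t
  | Sum.inl i, Sum.inr i' => i' = i ∧ dist (x i) (diagProj (x i)) ≤ t
  | Sum.inr j, Sum.inl j' => j' = j ∧ dist (diagProj (y j)) (y j) ≤ t
  | Sum.inr _, Sum.inr _ => True

/-- A matching in the bipartite graph `G`: a set of pairwise disjoint edges. -/
noncomputable def IsGraphMatching {a b : ℕ} (x : Fin a → ℝ × ℝ) (y : Fin b → ℝ × ℝ)
    (t : ℝ) (M : Finset ((Fin a ⊕ Fin b) × (Fin b ⊕ Fin a))) : Prop :=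
  (∀ e ∈ M, GEdge x y t e.1 e.2) ∧
  (∀ e ∈ M, ∀ e' ∈ M, e.1 = e'.1 → e = e') ∧
  (∀ e ∈ M, ∀ e' ∈ M, e.2 = e'.2 → e = e')

/-! A matching of the diagrams is the same as a bijection `σ : X₀ ⊔ Y₀' ≃ Y₀ ⊔ X₀'`, and a
matching of `G` is a partial bijection, which extends to a bijection. Every edge of `G` has
cost `≤ t`, so a matching of `G` is no larger than the number of pairs of cost `≤ t` of any
bijection extending it. Conversely, any bijection `σ` can be repaired into a bijection `σ'`
with at least as many edges of `G` as `σ` has pairs of cost `≤ t`: a point that `σ` matches to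
the diagonal is instead matched to its own projection, the nearest diagonal point, and the
leftover projections are paired among themselves at cost `0`. -/

open Finset Sum

lemma pairCost_le_dist_s19 (p q : ℝ × ℝ) : pairCost p q ≤ dist p q := by
  unfold pairCost
  split_ifs
  exacts [dist_nonneg, le_rfl]

lemma pairCost_eq_dist_of_left {p : ℝ × ℝ} (hp : p.1 ≠ p.2) (q : ℝ × ℝ) :
    pairCost p q = dist p q :=
  if_neg fun h => hp h.1

lemma pairCost_eq_dist_of_right (p : ℝ × ℝ) {q : ℝ × ℝ} (hq : q.1 ≠ q.2) :
    pairCost p q = dist p q :=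
  if_neg fun h => hq h.2

lemma pairCost_diagProj_diagProj (p q : ℝ × ℝ) : pairCost (diagProj p) (diagProj q) = 0 :=
  if_pos ⟨rfl, rfl⟩

lemma dist_diagProj_le (p : ℝ × ℝ) {q : ℝ × ℝ} (hq : q.1 = q.2) :
    dist p (diagProj p) ≤ dist p q := by
  obtain ⟨p₁, p₂⟩ := p
  obtain ⟨s, s'⟩ := q
  obtain rfl : s = s' := hq
  have h := abs_sub_le p₁ s p₂
  rw [abs_sub_comm s p₂] at h
  have h₁ : |p₁ - (p₁ + p₂) / 2| = |p₁ - p₂| / 2 := by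
    rw [show p₁ - (p₁ + p₂) / 2 = (p₁ - p₂) / 2 by ring, abs_div, abs_two]
  have h₂ : |p₂ - (p₁ + p₂) / 2| = |p₁ - p₂| / 2 := by
    rw [show p₂ - (p₁ + p₂) / 2 = -((p₁ - p₂) / 2) by ring, abs_neg, abs_div, abs_two]
  simp only [Prod.dist_eq, Real.dist_eq, diagProj, h₁, h₂, max_self]
  linarith [le_max_left |p₁ - s| |p₂ - s|, le_max_right |p₁ - s| |p₂ - s|]

lemma dist_diagProj_le' (p : ℝ × ℝ) {q : ℝ × ℝ} (hq : q.1 = q.2) :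
    dist (diagProj p) p ≤ dist q p := by
  simpa only [dist_comm] using dist_diagProj_le p hq

lemma IsMatching.card_eq {X Y : PD} {P : Multiset ((ℝ × ℝ) × (ℝ × ℝ))}
    (hP : IsMatching X Y P) : Multiset.card P = Multiset.card X.pts + Multiset.card Y.pts := by
  simpa using congrArg Multiset.card hP.1

lemma isMatching_toDiagonal (X Y : PD) :
    IsMatching X Y
      (X.pts.map (fun p => (p, diagProj p)) + Y.pts.map (fun q => (diagProj q, q))) := by
  constructor <;> simp [Multiset.map_map, add_comm]

lemma bprofile_eq_card_sub_sSup (X Y : PD) (t : ℝ) :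
    bprofile X Y t = ((Multiset.card X.pts + Multiset.card Y.pts -
      sSup {n : ℕ | ∃ P, IsMatching X Y P ∧
        n = Multiset.countP (fun uv => pairCost uv.1 uv.2 ≤ t) P} : ℕ) : ℝ≥0∞) := by
  set S := {n : ℕ | ∃ P, IsMatching X Y P ∧
    n = Multiset.countP (fun uv => pairCost uv.1 uv.2 ≤ t) P}
  have hfar : ∀ P, IsMatching X Y P → Multiset.countP (fun uv => t < pairCost uv.1 uv.2) P
      = Multiset.card X.pts + Multiset.card Y.pts
        - Multiset.countP (fun uv => pairCost uv.1 uv.2 ≤ t) P := by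
    intro P hP
    rw [← hP.card_eq, Multiset.card_eq_countP_add_countP (fun uv => pairCost uv.1 uv.2 ≤ t) P]
    simp only [not_le, add_tsub_cancel_left]
  have hbdd : BddAbove S := by
    refine ⟨Multiset.card X.pts + Multiset.card Y.pts, ?_⟩
    rintro _ ⟨P, hP, rfl⟩
    exact hP.card_eq ▸ Multiset.countP_le_card _ _
  obtain ⟨P₀, hP₀, hmax⟩ : sSup S ∈ S := Nat.sSup_mem ⟨_, _, isMatching_toDiagonal X Y, rfl⟩ hbdd
  refine le_antisymm (iInf_le_of_le ⟨P₀, hP₀⟩ (by rw [hfar P₀ hP₀, hmax])) (le_iInf ?_)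
  rintro ⟨P, hP⟩
  rw [hfar P hP]
  exact_mod_cast Nat.sub_le_sub_left (le_csSup hbdd ⟨P, hP, rfl⟩) _

lemma exists_equiv_of_map_univ_eq {ι κ α : Type*} [Fintype ι] [Fintype κ] {f : ι → α}
    {g : κ → α} (h : univ.val.map f = univ.val.map g) : ∃ e : ι ≃ κ, ∀ i, g (e i) = f i := by
  have hfiber : ∀ c, Fintype.card {i // f i = c} = Fintype.card {k // g k = c} := by
    intro c
    have := congrArg (Multiset.count c) h
    simp only [Multiset.count_map] at this
    simpa only [Fintype.card_subtype, card_def, filter_val, eq_comm] using this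
  exact ⟨Equiv.ofFiberEquiv fun c => Fintype.equivOfCardEq (hfiber c), Equiv.ofFiberEquiv_map _⟩

lemma exists_equiv_of_map_fst_of_map_snd {ι κ α β : Type*} [Fintype ι] [Fintype κ]
    {f : ι → α} {g : κ → β} {P : Multiset (α × β)}
    (h₁ : P.map Prod.fst = univ.val.map f) (h₂ : P.map Prod.snd = univ.val.map g) :
    ∃ σ : ι ≃ κ, P = univ.val.map fun i => (f i, g (σ i)) := by
  have hP := Multiset.map_univ_coe P
  obtain ⟨e₁, he₁⟩ := exists_equiv_of_map_univ_eq (f := fun p : P => (p : α × β).1) (g := f)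
    (by conv_rhs => rw [← h₁, ← hP, Multiset.map_map, Function.comp_def])
  obtain ⟨e₂, he₂⟩ := exists_equiv_of_map_univ_eq (f := fun p : P => (p : α × β).2) (g := g)
    (by conv_rhs => rw [← h₂, ← hP, Multiset.map_map, Function.comp_def])
  refine ⟨e₁.symm.trans e₂, ?_⟩
  rw [← Multiset.map_univ_val_equiv e₁, Multiset.map_map]
  conv_lhs => rw [← hP]
  exact Multiset.map_congr rfl fun p _ => by simp [he₁, he₂]

lemma exists_equiv_extending_pair {D ι κ : Type*} [Finite D] (e : ι ≃ κ) {f : D → ι}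
    {g : D → κ} (hf : Function.Injective f) (hg : Function.Injective g) :
    ∃ σ : ι ≃ κ, ∀ d, σ (f d) = g d := by
  obtain ⟨π, hπ⟩ := Equiv.Perm.exists_extending_pair (e ∘ f) g (e.injective.comp hf) hg
  exact ⟨e.trans π, hπ⟩

lemma map_univ_sumElim {α β γ : Type*} [Fintype α] [Fintype β] (f : α → γ) (g : β → γ) :
    univ.val.map (Sum.elim f g) = univ.val.map f + univ.val.map g := by
  rw [← univ_disjSum_univ, val_disjSum, Multiset.disjSum, Multiset.map_add, Multiset.map_map,
    Multiset.map_map]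
  rfl

section Diagrams

variable {a b : ℕ} (x : Fin a → ℝ × ℝ) (y : Fin b → ℝ × ℝ)

/-- The points of `U = X₀ ⊔ Y₀'`. -/
noncomputable def leftPoint : Fin a ⊕ Fin b → ℝ × ℝ := Sum.elim x (diagProj ∘ y)

/-- The points of `V = Y₀ ⊔ X₀'`. -/
noncomputable def rightPoint : Fin b ⊕ Fin a → ℝ × ℝ := Sum.elim y (diagProj ∘ x)

noncomputable def equivMatching (σ : Fin a ⊕ Fin b ≃ Fin b ⊕ Fin a) :
    Multiset ((ℝ × ℝ) × (ℝ × ℝ)) :=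
  univ.val.map fun w => (leftPoint x y w, rightPoint x y (σ w))

variable {x y}

lemma isMatching_equivMatching {X Y : PD} (hX : X.pts = univ.val.map x)
    (hY : Y.pts = univ.val.map y) (σ : Fin a ⊕ Fin b ≃ Fin b ⊕ Fin a) :
    IsMatching X Y (equivMatching x y σ) := by
  constructor
  · rw [equivMatching, Multiset.map_map, hX, hY, Multiset.map_map]
    exact map_univ_sumElim x (diagProj ∘ y)
  · rw [equivMatching, Multiset.map_map, hX, hY, Multiset.map_map]
    rw [← map_univ_sumElim y (diagProj ∘ x), ← Multiset.map_univ_val_equiv σ, Multiset.map_map]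
    rfl

lemma IsMatching.exists_eq_equivMatching {X Y : PD} (hX : X.pts = univ.val.map x)
    (hY : Y.pts = univ.val.map y) {P : Multiset ((ℝ × ℝ) × (ℝ × ℝ))} (hP : IsMatching X Y P) :
    ∃ σ : Fin a ⊕ Fin b ≃ Fin b ⊕ Fin a, P = equivMatching x y σ := by
  refine exists_equiv_of_map_fst_of_map_snd ?_ ?_
  · rw [hP.1, hX, hY, Multiset.map_map]
    exact (map_univ_sumElim x (diagProj ∘ y)).symm
  · rw [hP.2, hX, hY, Multiset.map_map]
    exact (map_univ_sumElim y (diagProj ∘ x)).symm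

lemma countP_equivMatching (t : ℝ) (σ : Fin a ⊕ Fin b ≃ Fin b ⊕ Fin a) :
    Multiset.countP (fun uv => pairCost uv.1 uv.2 ≤ t) (equivMatching x y σ)
      = #{w | pairCost (leftPoint x y w) (rightPoint x y (σ w)) ≤ t} := by
  rw [equivMatching, Multiset.countP_map, card_def, filter_val]

end Diagrams

section GraphMatchings

variable {a b : ℕ} (x : Fin a → ℝ × ℝ) (y : Fin b → ℝ × ℝ) (t : ℝ)

noncomputable def equivGraphMatching (σ : Fin a ⊕ Fin b ≃ Fin b ⊕ Fin a) :
    Finset ((Fin a ⊕ Fin b) × (Fin b ⊕ Fin a)) :=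
  ({w | GEdge x y t w (σ w)} : Finset _).image fun w => (w, σ w)

variable {x y t}

lemma isGraphMatching_equivGraphMatching (σ : Fin a ⊕ Fin b ≃ Fin b ⊕ Fin a) :
    IsGraphMatching x y t (equivGraphMatching x y t σ) := by
  refine ⟨?_, ?_, ?_⟩ <;> simp only [equivGraphMatching, mem_image, mem_filter, mem_univ,
    true_and, forall_exists_index, and_imp]
  · rintro _ w hw rfl
    exact hw
  · rintro _ w - rfl _ w' - rfl rfl
    rfl
  · rintro _ w - rfl _ w' - rfl h
    rw [σ.injective h]

lemma card_equivGraphMatching (σ : Fin a ⊕ Fin b ≃ Fin b ⊕ Fin a) :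
    #(equivGraphMatching x y t σ) = #{w | GEdge x y t w (σ w)} :=
  card_image_of_injective _ fun _ _ h => congrArg Prod.fst h

lemma IsGraphMatching.exists_card_le {M : Finset ((Fin a ⊕ Fin b) × (Fin b ⊕ Fin a))}
    (hM : IsGraphMatching x y t M) :
    ∃ σ : Fin a ⊕ Fin b ≃ Fin b ⊕ Fin a, #M ≤ #{w | GEdge x y t w (σ w)} := by
  obtain ⟨σ, hσ⟩ := exists_equiv_extending_pair (Equiv.sumComm _ _)
    (f := fun e : M => e.1.1) (g := fun e : M => e.1.2)
    (fun e e' h => Subtype.ext (hM.2.1 _ e.2 _ e'.2 h))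
    (fun e e' h => Subtype.ext (hM.2.2 _ e.2 _ e'.2 h))
  refine ⟨σ, card_le_card_of_injOn Prod.fst (fun e he => ?_) fun e he e' he' => hM.2.1 e he e' he'⟩
  simpa [hσ ⟨e, he⟩] using hM.1 e he

lemma pairCost_le_of_gEdge (ht : 0 ≤ t) {u : Fin a ⊕ Fin b} {v : Fin b ⊕ Fin a}
    (h : GEdge x y t u v) : pairCost (leftPoint x y u) (rightPoint x y v) ≤ t := by
  match u, v, h with
  | .inl _, .inl _, h => exact (pairCost_le_dist_s19 _ _).trans h
  | .inl _, .inr _, ⟨rfl, h⟩ => exact (pairCost_le_dist_s19 _ _).trans h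
  | .inr _, .inl _, ⟨rfl, h⟩ => exact (pairCost_le_dist_s19 _ _).trans h
  | .inr _, .inr _, _ => exact (pairCost_diagProj_diagProj _ _).trans_le ht

lemma card_gEdge_le_card_pairCost_le (ht : 0 ≤ t) (σ : Fin a ⊕ Fin b ≃ Fin b ⊕ Fin a) :
    #{w | GEdge x y t w (σ w)} ≤ #{w | pairCost (leftPoint x y w) (rightPoint x y (σ w)) ≤ t} :=
  card_le_card (monotone_filter_right _ fun _ _ => pairCost_le_of_gEdge ht)

end GraphMatchings

section Repair

variable {α β : Type*}

/-- The partner of the point `j` of `Y₀` in a repair of `σ`: its `σ`-partner if that lies in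
`X₀`, and its own projection otherwise. -/
def repairSource (σ : α ⊕ β ≃ β ⊕ α) (j : β) : α ⊕ β :=
  (σ.symm (inl j)).elim inl fun _ => inr j

lemma repairSource_of_symm_eq_inl {σ : α ⊕ β ≃ β ⊕ α} {j : β} {i : α}
    (h : σ.symm (inl j) = inl i) : repairSource σ j = inl i := by
  simp [repairSource, h]

lemma repairSource_of_symm_eq_inr {σ : α ⊕ β ≃ β ⊕ α} {j j₀ : β}
    (h : σ.symm (inl j) = inr j₀) : repairSource σ j = inr j := by
  simp [repairSource, h]

lemma repairSource_injective (σ : α ⊕ β ≃ β ⊕ α) : Function.Injective (repairSource σ) := by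
  intro j j' h
  rcases hj : σ.symm (inl j) with i | j₀ <;> rcases hj' : σ.symm (inl j') with i' | j₀' <;>
    simp only [repairSource_of_symm_eq_inl, repairSource_of_symm_eq_inr, hj, hj',
      inl.injEq, inr.injEq, reduceCtorEq] at h
  · exact inl_injective (σ.symm.injective (hj.trans (h ▸ hj'.symm)))
  · exact h

/-- `σ'` matches each point of `Y₀` with its `repairSource`, and each point of `X₀` that `σ`
sends to `X₀'` with its own projection. -/
def IsRepair (σ σ' : α ⊕ β ≃ β ⊕ α) : Prop :=
  (∀ j, σ' (repairSource σ j) = inl j) ∧ ∀ i k, σ (inl i) = inr k → σ' (inl i) = inr i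

lemma exists_isRepair [Finite α] [Finite β] (σ : α ⊕ β ≃ β ⊕ α) : ∃ σ', IsRepair σ σ' := by
  have hsep : ∀ j (i : {i : α // (σ (inl i)).isRight}), repairSource σ j ≠ inl i.1 := by
    rintro j ⟨i, hi⟩ h
    rcases hj : σ.symm (inl j) with i' | j₀
    · obtain rfl : i' = i := inl_injective ((repairSource_of_symm_eq_inl hj).symm.trans h)
      simp [← (Equiv.symm_apply_eq σ).mp hj] at hi
    · simp [repairSource_of_symm_eq_inr hj] at h
  obtain ⟨σ', hσ'⟩ := exists_equiv_extending_pair σ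
    ((repairSource_injective σ).sumElim (inl_injective.comp Subtype.val_injective) hsep)
    (Function.injective_id.sumMap Subtype.val_injective)
  exact ⟨σ', fun j => hσ' (inl j), fun i k hk => hσ' (inr ⟨i, by simp [hk]⟩)⟩

variable {σ σ' : α ⊕ β ≃ β ⊕ α}

lemma IsRepair.eq_repairSource {j : β} {w : α ⊕ β} (h : IsRepair σ σ') (hw : σ' w = inl j) :
    w = repairSource σ j :=
  σ'.injective (hw.trans (h.1 j).symm)

lemma IsRepair.exists_of_eq_inr {i i' : α} (h : IsRepair σ σ') (hi : σ' (inl i') = inr i) :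
    i' = i ∧ ∃ k, σ (inl i') = inr k := by
  rcases hσ : σ (inl i') with j | k
  · have hsrc := repairSource_of_symm_eq_inl ((Equiv.symm_apply_eq σ).mpr hσ.symm)
    simp [← hsrc, h.1 j] at hi
  · exact ⟨inr_injective ((h.2 i' k hσ).symm.trans hi), k, rfl⟩

end Repair

section Counting

variable {a b : ℕ} {x : Fin a → ℝ × ℝ} {y : Fin b → ℝ × ℝ} {t : ℝ}
  {σ σ' : Fin a ⊕ Fin b ≃ Fin b ⊕ Fin a}

lemma IsRepair.eq_inl_of_not_gEdge (h : IsRepair σ σ') {w : Fin a ⊕ Fin b} {i : Fin a}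
    (hw : σ' w = inr i) (hbad : ¬GEdge x y t w (σ' w)) : w = inl i ∧ ∃ k, σ (inl i) = inr k := by
  rcases w with i' | j
  · obtain ⟨rfl, hk⟩ := h.exists_of_eq_inr hw
    exact ⟨rfl, hk⟩
  · rw [hw] at hbad
    exact absurd trivial hbad

/-- Each non-edge of the repair is witnessed by a pair of `σ` of cost `> t`: the pair of `σ`
ending at the same point of `Y₀`, or the same pair if it ends in `X₀'`. -/
lemma IsRepair.card_not_gEdge_le (hx : ∀ i, (x i).1 < (x i).2) (hy : ∀ j, (y j).1 < (y j).2)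
    (h : IsRepair σ σ') :
    #{w | ¬GEdge x y t w (σ' w)}
      ≤ #{w | ¬pairCost (leftPoint x y w) (rightPoint x y (σ w)) ≤ t} := by
  refine card_le_card_of_injOn (fun w => (σ' w).elim (fun j => σ.symm (inl j)) fun _ => w)
    (fun w hw => ?_) (fun w₁ hw₁ w₂ hw₂ heq => ?_)
  · simp only [coe_filter, mem_univ, true_and, Set.mem_ofPred_eq] at hw ⊢
    rcases hσ' : σ' w with j | i
    · have hw' := h.eq_repairSource hσ'
      rw [hσ'] at hw
      simp only [elim_inl, Equiv.apply_symm_apply]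
      rcases hs : σ.symm (inl j) with i | j₀
      · rw [hw', repairSource_of_symm_eq_inl hs] at hw
        rw [leftPoint, rightPoint, elim_inl, elim_inl, pairCost_eq_dist_of_left (hx i).ne]
        exact hw
      · rw [hw', repairSource_of_symm_eq_inr hs] at hw
        rw [leftPoint, rightPoint, elim_inr, elim_inl, pairCost_eq_dist_of_right _ (hy j).ne]
        exact fun hle => hw ⟨rfl, (dist_diagProj_le' (y j) rfl).trans hle⟩
    · obtain ⟨rfl, k, hk⟩ := h.eq_inl_of_not_gEdge hσ' hw
      rw [hσ'] at hw
      simp only [elim_inr, hk]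
      rw [leftPoint, rightPoint, elim_inl, elim_inr, pairCost_eq_dist_of_left (hx i).ne]
      exact fun hle => hw ⟨rfl, (dist_diagProj_le (x i) rfl).trans hle⟩
  · simp only [coe_filter, mem_univ, true_and, Set.mem_ofPred_eq] at hw₁ hw₂
    rcases h₁ : σ' w₁ with j₁ | i₁ <;> rcases h₂ : σ' w₂ with j₂ | i₂ <;>
      simp only [h₁, h₂, elim_inl, elim_inr] at heq
    · exact σ'.injective (h₁.trans (inl_injective (σ.symm.injective heq) ▸ h₂.symm))
    · obtain ⟨rfl, k, hk⟩ := h.eq_inl_of_not_gEdge h₂ hw₂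
      simp [← heq] at hk
    · obtain ⟨rfl, k, hk⟩ := h.eq_inl_of_not_gEdge h₁ hw₁
      simp [heq] at hk
    · exact heq

end Counting

lemma exists_card_pairCost_le_le_card_gEdge {a b : ℕ} {x : Fin a → ℝ × ℝ} {y : Fin b → ℝ × ℝ}
    (hx : ∀ i, (x i).1 < (x i).2) (hy : ∀ j, (y j).1 < (y j).2) (t : ℝ)
    (σ : Fin a ⊕ Fin b ≃ Fin b ⊕ Fin a) :
    ∃ σ' : Fin a ⊕ Fin b ≃ Fin b ⊕ Fin a,
      #{w | pairCost (leftPoint x y w) (rightPoint x y (σ w)) ≤ t}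
        ≤ #{w | GEdge x y t w (σ' w)} := by
  obtain ⟨σ', h⟩ := exists_isRepair σ
  refine ⟨σ', ?_⟩
  have hbad := h.card_not_gEdge_le (t := t) hx hy
  have hedge := card_filter_add_card_filter_not (s := univ) fun w => GEdge x y t w (σ' w)
  have hcost := card_filter_add_card_filter_not (s := univ)
    fun w => pairCost (leftPoint x y w) (rightPoint x y (σ w)) ≤ t
  omega

/-- The maximum cardinality `M` of a matching in the bipartite graph `G` equals
`sup_η |{u : d(u, η u) ≤ t}|`, the supremum over all matchings `η` between the diagrams;
equivalently, `D_{X,Y}(t) = |X₀| + |Y₀| - M`. -/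
theorem graph_matching_computes_bprofile {a b : ℕ}
    (x : Fin a → ℝ × ℝ) (y : Fin b → ℝ × ℝ)
    (hx : ∀ i, (x i).1 < (x i).2) (hy : ∀ j, (y j).1 < (y j).2)
    (X Y : PD)
    (hX : X.pts = Multiset.map x Finset.univ.val)
    (hY : Y.pts = Multiset.map y Finset.univ.val)
    (t : ℝ) (ht : 0 ≤ t) :
    sSup {n : ℕ | ∃ M, IsGraphMatching x y t M ∧ M.card = n}
      = sSup {n : ℕ | ∃ P, IsMatching X Y P ∧
          n = Multiset.countP (fun uv => pairCost uv.1 uv.2 ≤ t) P} ∧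
    bprofile X Y t
      = ((a + b - sSup {n : ℕ | ∃ M, IsGraphMatching x y t M ∧ M.card = n} : ℕ) : ℝ≥0∞) := by
  have hsup : sSup {n : ℕ | ∃ M, IsGraphMatching x y t M ∧ M.card = n}
      = sSup {n : ℕ | ∃ P, IsMatching X Y P ∧
          n = Multiset.countP (fun uv => pairCost uv.1 uv.2 ≤ t) P} := by
    refine csSup_eq_csSup_of_forall_exists_le ?_ ?_
    · rintro _ ⟨M, hM, rfl⟩
      obtain ⟨σ, hσ⟩ := hM.exists_card_le
      refine ⟨_, ⟨equivMatching x y σ, isMatching_equivMatching hX hY σ, rfl⟩, ?_⟩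
      rw [countP_equivMatching]
      exact hσ.trans (card_gEdge_le_card_pairCost_le ht σ)
    · rintro _ ⟨P, hP, rfl⟩
      obtain ⟨σ, rfl⟩ := hP.exists_eq_equivMatching hX hY
      obtain ⟨σ', hσ'⟩ := exists_card_pairCost_le_le_card_gEdge hx hy t σ
      refine ⟨_, ⟨_, isGraphMatching_equivGraphMatching σ', rfl⟩, ?_⟩
      rwa [countP_equivMatching, card_equivGraphMatching]
  have hcard : Multiset.card X.pts + Multiset.card Y.pts = a + b := by simp [hX, hY]
  exact ⟨hsup, by rw [bprofile_eq_card_sub_sSup, hcard, hsup]⟩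
end
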